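/- arXiv:1404.6821 — 3 statements merged into one kernel-verified Lean document; each statement's English description precedes it below -/
import Mathlib

section
/- Let P be a path with endpoints u and v, and let L be a list assignment on P with |L(x)| = 4 for every vertex x of P. Then there is an injective function h from the 2-element subsets of L(u) to the 2-element subsets of L(v) such that for every 2-element subset p of L(u), there exists a 2-tuple L-colouring f of P with f(u) = p and f(v) = h(p). -/
/-- Given the lists `L(v_1), …, L(v_n)` of a path (as a list of finsets, in order) and a
"previous" set, the sequence `X_1 = L(v_1)`, `X_i = L(v_i) \ X_{i-1}`. -/
def Xseq : Finset ℕ → List (Finset ℕ) → List (Finset ℕ)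
  | _, [] => []
  | prev, l :: ls => (l \ prev) :: Xseq (l \ prev) ls

/-- `S_L(P) = Σ_{i=1}^n |X_i|`. -/
def SL (ls : List (Finset ℕ)) : ℕ := ((Xseq ∅ ls).map Finset.card).sum

/-- `X_{i+1}` (0-indexed access to the sequence `X_1, …, X_n`). -/
def Xat (ls : List (Finset ℕ)) (i : ℕ) : Finset ℕ := (Xseq ∅ ls).getD i ∅

/-- `A = ∩_{x ∈ V(P)} L(x)`. -/
def Aset : List (Finset ℕ) → Finset ℕ
  | [] => ∅
  | a :: rest => rest.foldl (· ∩ ·) a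

/-- For a colour `c`, the least 0-indexed position `i` with `c ∉ L(v_{i+1})`
(so the paper's `f(c)` is `firstMissing + 1`). -/
noncomputable def firstMissing (ls : List (Finset ℕ)) (c : ℕ) : ℕ :=
  sInf {i | i < ls.length ∧ c ∉ ls.getD i ∅}

open Classical in
/-- `X̂_1 = { c ∈ L(v_1) \ A : f(c) is even }` (with the paper's 1-indexed `f`,
i.e. `firstMissing` is odd). -/
noncomputable def hatX1 (ls : List (Finset ℕ)) : Finset ℕ :=
  (ls.getD 0 ∅ \ Aset ls).filter fun c => Odd (firstMissing ls c)

/-- `X̂_n = X_n \ A`. -/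
def hatXn (ls : List (Finset ℕ)) : Finset ℕ := Xat ls (ls.length - 1) \ Aset ls

/-- `L[p,q]`: delete the colours of `p` from `L(v_1)` and the colours of `q` from `L(v_n)`. -/
def delEnds (p q : Finset ℕ) (ls : List (Finset ℕ)) : List (Finset ℕ) :=
  ((ls.modifyHead (· \ p)).reverse.modifyHead (· \ q)).reverse

/-- The damage `dam_{L,P}(p,q) = S_L(P) − S_{L[p,q]}(P)` (as an integer). -/
def damZ (ls : List (Finset ℕ)) (p q : Finset ℕ) : ℤ :=
  (SL ls : ℤ) - SL (delEnds p q ls)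

/-- The path `v_1 ⋯ v_n` with lists `L(v_1), …, L(v_n)` admits a `b`-tuple list
colouring: consecutive vertices receive disjoint `b`-subsets of their lists. -/
def PathListColorable (b : ℕ) (ls : List (Finset ℕ)) : Prop :=
  ∃ f : ℕ → Finset ℕ,
    (∀ i, i < ls.length → f i ⊆ ls.getD i ∅ ∧ (f i).card = b) ∧
    (∀ i, i + 1 < ls.length → Disjoint (f i) (f (i + 1)))

/-!
For a single edge `uv` with `|L(u)| ≤ |L(v)|`, fix an injection `ψ : L(u) → L(v)` that is the
identity on `L(u) ∩ L(v)` (so it sends `L(u) \ L(v)` into `L(v) \ L(u)`). Then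
`p ↦ ψ(L(u) \ p)` is injective on the `b`-subsets of `L(u)`, and `ψ(L(u) \ p)` misses `p`: a
colour of `p` lying in the image of `ψ` is a fixed point of `ψ`, hence not in `L(u) \ p`. When
`|L(u)| = 2b` these images are `b`-subsets of `L(v)`, and composing the maps edge by edge along
the path gives `h` together with the colourings.
-/

open Finset

namespace Finset

variable {α : Type*} [DecidableEq α]

theorem exists_injOn_mapsTo_of_card_le {A B : Finset α} (hAB : #A ≤ #B) :
    ∃ ψ : α → α, Set.InjOn ψ A ∧ Set.MapsTo ψ A B ∧ ∀ x ∈ A, ψ x ∈ A → ψ x = x := by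
  have hcard : #(A \ B) ≤ #(B \ A) := by
    have := card_sdiff_add_card_inter A B
    have := card_sdiff_add_card_inter B A
    rw [inter_comm] at this
    omega
  obtain ⟨e⟩ : Nonempty ((A \ B : Finset α) ↪ (B \ A : Finset α)) :=
    Function.Embedding.nonempty_of_card_le (by simpa using hcard)
  let ψ : α → α := fun x => if hx : x ∈ A \ B then e ⟨x, hx⟩ else x
  have hmoved : ∀ x (hx : x ∈ A \ B), ψ x = e ⟨x, hx⟩ := fun x hx => dif_pos hx
  have hfixed : ∀ x ∈ A, x ∈ B → ψ x = x := fun x _ hxB => dif_neg fun h => (mem_sdiff.1 h).2 hxB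
  have hmoved_mem : ∀ x (hx : x ∈ A \ B), ψ x ∈ B \ A := fun x hx => hmoved x hx ▸ (e _).2
  refine ⟨ψ, fun x hx y hy hxy => ?_, fun x hx => ?_, fun x hx hψx => ?_⟩
  · by_cases hxB : x ∈ B <;> by_cases hyB : y ∈ B
    · rwa [hfixed x hx hxB, hfixed y hy hyB] at hxy
    · have := (mem_sdiff.1 (hmoved_mem y (mem_sdiff.2 ⟨hy, hyB⟩))).2
      rw [← hxy, hfixed x hx hxB] at this
      exact absurd hx this
    · have := (mem_sdiff.1 (hmoved_mem x (mem_sdiff.2 ⟨hx, hxB⟩))).2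
      rw [hxy, hfixed y hy hyB] at this
      exact absurd hy this
    · rw [hmoved x (mem_sdiff.2 ⟨hx, hxB⟩), hmoved y (mem_sdiff.2 ⟨hy, hyB⟩)] at hxy
      exact congrArg Subtype.val (e.injective (Subtype.ext hxy))
  · by_cases hxB : x ∈ B
    · rwa [hfixed x hx hxB]
    · exact (mem_sdiff.1 (hmoved_mem x (mem_sdiff.2 ⟨hx, hxB⟩))).1
  · by_cases hxB : x ∈ B
    · exact hfixed x hx hxB
    · exact absurd hψx (mem_sdiff.1 (hmoved_mem x (mem_sdiff.2 ⟨hx, hxB⟩))).2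

theorem exists_injOn_powersetCard_disjoint {A B : Finset α} (hAB : #A ≤ #B) (k : ℕ) :
    ∃ g : Finset α → Finset α, Set.InjOn g (powersetCard k A) ∧
      ∀ p ∈ powersetCard k A, g p ∈ powersetCard (#A - k) B ∧ Disjoint p (g p) := by
  obtain ⟨ψ, hinj, hmaps, hfix⟩ := exists_injOn_mapsTo_of_card_le hAB
  refine ⟨fun p => (A \ p).image ψ, fun p hp q hq hpq => ?_, fun p hp => ?_⟩
  · rw [mem_coe, mem_powersetCard] at hp hq
    have : A \ p = A \ q := by
      rw [← coe_inj, ← (hinj.image_eq_image_iff (by simp) (by simp)), ← coe_image, ← coe_image]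
      exact congrArg _ hpq
    rw [← sdiff_sdiff_eq_self hp.1, this, sdiff_sdiff_eq_self hq.1]
  · rw [mem_powersetCard] at hp ⊢
    refine ⟨⟨image_subset_iff.2 fun x hx => hmaps (mem_sdiff.1 hx).1, ?_⟩, ?_⟩
    · rw [card_image_of_injOn (hinj.mono (by simp)), card_sdiff_of_subset hp.1, hp.2]
    · rw [disjoint_left]
      rintro x hxp hx
      obtain ⟨y, hy, rfl⟩ := mem_image.1 hx
      rw [hfix y (mem_sdiff.1 hy).1 (hp.1 hxp)] at hxp
      exact (mem_sdiff.1 hy).2 hxp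

end Finset

section PathColoring

variable {α : Type*}

def IsTupleColoring (b : ℕ) (ls : List (Finset α)) (f : ℕ → Finset α) : Prop :=
  (∀ i < ls.length, f i ⊆ ls.getD i ∅ ∧ #(f i) = b) ∧
    ∀ i, i + 1 < ls.length → Disjoint (f i) (f (i + 1))

theorem isTupleColoring_const_of_length_le_one {b : ℕ} {ls : List (Finset α)} {p : Finset α}
    (hls : ls.length ≤ 1) (hp : p ∈ powersetCard b (ls.getD 0 ∅)) :
    IsTupleColoring b ls fun _ => p := by
  rw [mem_powersetCard] at hp
  refine ⟨fun i hi => ?_, fun i hi => by omega⟩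
  obtain rfl : i = 0 := by omega
  exact hp

theorem IsTupleColoring.cons {b : ℕ} {a : Finset α} {ls : List (Finset α)} {f : ℕ → Finset α}
    {p : Finset α} (hf : IsTupleColoring b ls f) (hp : p ∈ powersetCard b a)
    (hdisj : Disjoint p (f 0)) :
    IsTupleColoring b (a :: ls) fun | 0 => p | i + 1 => f i := by
  rw [mem_powersetCard] at hp
  refine ⟨fun i hi => ?_, fun i hi => ?_⟩
  · cases i with
    | zero => exact hp
    | succ i => exact hf.1 i (by simpa using hi)
  · cases i with
    | zero => exact hdisj
    | succ i => exact hf.2 i (by simpa using hi)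

def HasExtendingInjection (b : ℕ) (ls : List (Finset α)) : Prop :=
  ∃ h : Finset α → Finset α, Set.InjOn h ↑(powersetCard b (ls.getD 0 ∅)) ∧
    ∀ p ∈ powersetCard b (ls.getD 0 ∅), h p ∈ powersetCard b (ls.getD (ls.length - 1) ∅) ∧
      ∃ f : ℕ → Finset α, IsTupleColoring b ls f ∧ f 0 = p ∧ f (ls.length - 1) = h p

theorem hasExtendingInjection_of_length_le_one {b : ℕ} {ls : List (Finset α)}
    (hls : ls.length ≤ 1) : HasExtendingInjection b ls := by
  have hlast : ls.length - 1 = 0 := by omega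
  refine ⟨id, Set.injOn_id _, fun p hp => ⟨hlast ▸ hp, fun _ => p, ?_, rfl, rfl⟩⟩
  exact isTupleColoring_const_of_length_le_one hls hp

variable [DecidableEq α]

theorem HasExtendingInjection.cons {b : ℕ} {a c : Finset α} {ls : List (Finset α)}
    (H : HasExtendingInjection b (c :: ls)) (ha : #a = 2 * b) (hac : #a ≤ #c) :
    HasExtendingInjection b (a :: c :: ls) := by
  obtain ⟨h, hinj, hh⟩ := H
  obtain ⟨g, ginj, hg⟩ := exists_injOn_powersetCard_disjoint hac b
  rw [ha, two_mul, Nat.add_sub_cancel] at hg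
  refine ⟨h ∘ g, hinj.comp ginj fun p hp => (hg p hp).1, fun p hp => ?_⟩
  obtain ⟨hgp, hdisj⟩ := hg p hp
  obtain ⟨hhgp, f, hf, hf0, hflast⟩ := hh (g p) hgp
  refine ⟨hhgp, fun | 0 => p | i + 1 => f i, hf.cons hp (hf0 ▸ hdisj), rfl, hflast⟩

theorem hasExtendingInjection_of_card_eq {b : ℕ} {ls : List (Finset α)}
    (hcard : ∀ i < ls.length, #(ls.getD i ∅) = 2 * b) : HasExtendingInjection b ls := by
  induction ls with
  | nil => exact hasExtendingInjection_of_length_le_one (by simp)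
  | cons a ls ih =>
    cases ls with
    | nil => exact hasExtendingInjection_of_length_le_one (by simp)
    | cons c ls =>
      have ha : #a = 2 * b := hcard 0 (by simp)
      have hc : #c = 2 * b := hcard 1 (by simp)
      exact (ih fun i hi => hcard (i + 1) (by simpa using hi)).cons ha (ha.trans hc.symm).le

end PathColoring

theorem exists_injection_extending_general (ls : List (Finset ℕ))
    (hcard : ∀ i, i < ls.length → (ls.getD i ∅).card = 4) :
    ∃ h : Finset ℕ → Finset ℕ,
      Set.InjOn h ↑(Finset.powersetCard 2 (ls.getD 0 ∅)) ∧
      ∀ p ∈ Finset.powersetCard 2 (ls.getD 0 ∅),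
        h p ∈ Finset.powersetCard 2 (ls.getD (ls.length - 1) ∅) ∧
        ∃ f : ℕ → Finset ℕ,
          (∀ i, i < ls.length → f i ⊆ ls.getD i ∅ ∧ (f i).card = 2) ∧
          (∀ i, i + 1 < ls.length → Disjoint (f i) (f (i + 1))) ∧
          f 0 = p ∧ f (ls.length - 1) = h p := by
  obtain ⟨h, hinj, hh⟩ := hasExtendingInjection_of_card_eq (b := 2) hcard
  refine ⟨h, hinj, fun p hp => ?_⟩
  obtain ⟨hhp, f, ⟨hsub, hdisj⟩, hf0, hflast⟩ := hh p hp
  exact ⟨hhp, f, hsub, hdisj, hf0, hflast⟩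

/-- Lemma `lem:inject`: for a path `v_1 ⋯ v_n` with all lists of size 4, there is an
injection `h` from the 2-subsets of `L(v_1)` to the 2-subsets of `L(v_n)` such that the
precolouring `f(v_1) = p`, `f(v_n) = h p` extends to a 2-tuple list colouring of the
whole path. -/
theorem exists_injection_extending (ls : List (Finset ℕ)) (hne : ls ≠ [])
    (hcard : ∀ i, i < ls.length → (ls.getD i ∅).card = 4) :
    ∃ h : Finset ℕ → Finset ℕ,
      Set.InjOn h ↑(Finset.powersetCard 2 (ls.getD 0 ∅)) ∧
      ∀ p ∈ Finset.powersetCard 2 (ls.getD 0 ∅),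
        h p ∈ Finset.powersetCard 2 (ls.getD (ls.length - 1) ∅) ∧
        ∃ f : ℕ → Finset ℕ,
          (∀ i, i < ls.length → f i ⊆ ls.getD i ∅ ∧ (f i).card = 2) ∧
          (∀ i, i + 1 < ls.length → Disjoint (f i) (f (i + 1))) ∧
          f 0 = p ∧ f (ls.length - 1) = h p :=
  exists_injection_extending_general ls hcard
end

section
/- Let m be a positive integer and let B, Y, Z be finite sets of colours with B ∩ Y = ∅, B ∩ Z = ∅, and |B| + |Y| + |Z| = 4m. Then there exists a list assignment L on a path P with 3 vertices v_1, v_2, v_3 such that |L(v_i)| = 4m for all i, A = B, X̂_1 = Y, X̂_3 = Z, and S_L(P) = 8m. -/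
section Realization

open Finset

theorem exists_finset_disjoint_card_eq {α : Type*} [DecidableEq α] [Infinite α]
    (s : Finset α) (k : ℕ) : ∃ t : Finset α, Disjoint s t ∧ #t = k := by
  obtain ⟨u, hsu, hu⟩ := Infinite.exists_superset_card_eq s (#s + k) (Nat.le_add_right _ _)
  exact ⟨u \ s, disjoint_sdiff, by rw [card_sdiff_of_subset hsu, hu, Nat.add_sub_cancel_left]⟩

theorem firstMissing_eq {ls : List (Finset ℕ)} {c i : ℕ} (hi : i < ls.length)
    (hc : c ∉ ls.getD i ∅) (hbefore : ∀ j < i, c ∈ ls.getD j ∅) : firstMissing ls c = i :=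
  le_antisymm (Nat.sInf_le ⟨hi, hc⟩)
    (le_csInf ⟨i, hi, hc⟩ fun j ⟨_, hj⟩ => not_lt.1 fun hji => hj (hbefore j hji))

theorem Aset_triple (a b c : Finset ℕ) : Aset [a, b, c] = a ∩ b ∩ c := rfl

theorem Xseq_triple (a b c : Finset ℕ) : Xseq ∅ [a, b, c] = [a, b \ a, c \ (b \ a)] := by
  simp [Xseq]

def realizingLists (B Y Z C D : Finset ℕ) : List (Finset ℕ) :=
  [B ∪ Y ∪ C, B ∪ C ∪ D, B ∪ Z ∪ D]

variable {B Y Z C D : Finset ℕ}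

theorem Aset_realizingLists (hC : Disjoint (B ∪ Y ∪ Z) C) (hD : Disjoint (B ∪ Y ∪ Z ∪ C) D) :
    Aset (realizingLists B Y Z C D) = B := by
  simp only [disjoint_left, mem_union] at hC hD
  ext x
  simp only [realizingLists, Aset_triple, mem_inter, mem_union]
  grind

theorem Xseq_realizingLists (hD : Disjoint (B ∪ Y ∪ Z ∪ C) D) :
    Xseq ∅ (realizingLists B Y Z C D) = [B ∪ Y ∪ C, D, B ∪ Z] := by
  simp only [disjoint_left, mem_union] at hD
  simp only [realizingLists, Xseq_triple, List.cons.injEq, true_and, and_true]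
  constructor <;> ext x <;> simp only [mem_sdiff, mem_union] <;> grind

theorem firstMissing_realizingLists_of_mem_Y (hBY : Disjoint B Y)
    (hC : Disjoint (B ∪ Y ∪ Z) C) (hD : Disjoint (B ∪ Y ∪ Z ∪ C) D) {y : ℕ} (hy : y ∈ Y) :
    firstMissing (realizingLists B Y Z C D) y = 1 := by
  simp only [disjoint_left, mem_union] at hBY hC hD
  refine firstMissing_eq (by simp [realizingLists]) ?_ fun j hj => ?_
  · simp only [realizingLists, List.getD_cons_succ, List.getD_cons_zero, mem_union]
    grind
  · obtain rfl : j = 0 := by omega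
    simp [realizingLists, hy]

theorem firstMissing_realizingLists_of_mem_C (hC : Disjoint (B ∪ Y ∪ Z) C)
    (hD : Disjoint (B ∪ Y ∪ Z ∪ C) D) {c : ℕ} (hc : c ∈ C) :
    firstMissing (realizingLists B Y Z C D) c = 2 := by
  simp only [disjoint_left, mem_union] at hC hD
  refine firstMissing_eq (by simp [realizingLists]) ?_ fun j hj => ?_
  · simp only [realizingLists, List.getD_cons_succ, List.getD_cons_zero, mem_union]
    grind
  · interval_cases j <;> simp [realizingLists, hc]

theorem hatX1_realizingLists (hBY : Disjoint B Y) (hC : Disjoint (B ∪ Y ∪ Z) C)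
    (hD : Disjoint (B ∪ Y ∪ Z ∪ C) D) : hatX1 (realizingLists B Y Z C D) = Y := by
  ext x
  simp only [hatX1, Aset_realizingLists hC hD, mem_filter, mem_sdiff]
  constructor
  · rintro ⟨⟨hx, hxB⟩, hodd⟩
    simp only [realizingLists, List.getD_cons_zero, mem_union] at hx
    rcases hx with (hxB' | hxY) | hxC
    · exact absurd hxB' hxB
    · exact hxY
    · rw [firstMissing_realizingLists_of_mem_C hC hD hxC] at hodd
      exact absurd hodd (by decide)
  · intro hy
    refine ⟨⟨by simp [realizingLists, hy], disjoint_right.1 hBY hy⟩, ?_⟩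
    rw [firstMissing_realizingLists_of_mem_Y hBY hC hD hy]
    exact odd_one

theorem hatXn_realizingLists (hBZ : Disjoint B Z) (hC : Disjoint (B ∪ Y ∪ Z) C)
    (hD : Disjoint (B ∪ Y ∪ Z ∪ C) D) : hatXn (realizingLists B Y Z C D) = Z := by
  rw [hatXn, Xat, Xseq_realizingLists hD, Aset_realizingLists hC hD]
  exact union_sdiff_cancel_left hBZ

theorem card_of_mem_realizingLists (hBY : Disjoint B Y) (hBZ : Disjoint B Z)
    (hC : Disjoint (B ∪ Y ∪ Z) C) (hD : Disjoint (B ∪ Y ∪ Z ∪ C) D)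
    (hCcard : #C = #Z) (hDcard : #D = #Y) :
    ∀ L ∈ realizingLists B Y Z C D, #L = #B + #Y + #Z := by
  simp only [disjoint_union_left] at hC hD
  obtain ⟨⟨hBC, hYC⟩, -⟩ := hC
  obtain ⟨⟨⟨hBD, -⟩, hZD⟩, hCD⟩ := hD
  simp only [realizingLists, List.mem_cons, List.not_mem_nil, or_false]
  rintro L (rfl | rfl | rfl)
  · rw [card_union_of_disjoint (disjoint_union_left.2 ⟨hBC, hYC⟩), card_union_of_disjoint hBY,
      hCcard]
  · rw [card_union_of_disjoint (disjoint_union_left.2 ⟨hBD, hCD⟩), card_union_of_disjoint hBC,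
      hCcard, hDcard]
    omega
  · rw [card_union_of_disjoint (disjoint_union_left.2 ⟨hBD, hZD⟩), card_union_of_disjoint hBZ,
      hDcard]
    omega

theorem SL_realizingLists (hBY : Disjoint B Y) (hBZ : Disjoint B Z)
    (hC : Disjoint (B ∪ Y ∪ Z) C) (hD : Disjoint (B ∪ Y ∪ Z ∪ C) D)
    (hCcard : #C = #Z) (hDcard : #D = #Y) :
    SL (realizingLists B Y Z C D) = 2 * (#B + #Y + #Z) := by
  have hL1 := card_of_mem_realizingLists hBY hBZ hC hD hCcard hDcard (B ∪ Y ∪ C)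
    (by simp [realizingLists])
  simp only [SL, Xseq_realizingLists hD, List.map_cons, List.map_nil, List.sum_cons,
    List.sum_nil, hL1, hDcard, card_union_of_disjoint hBZ]
  omega

end Realization

theorem realize_on_P3_general (m : ℕ) (B Y Z : Finset ℕ)
    (hBY : B ∩ Y = ∅) (hBZ : B ∩ Z = ∅)
    (hsum : B.card + Y.card + Z.card = 4 * m) :
    ∃ ls : List (Finset ℕ), ls.length = 3 ∧
      (∀ i, i < ls.length → (ls.getD i ∅).card = 4 * m) ∧
      Aset ls = B ∧ hatX1 ls = Y ∧ hatXn ls = Z ∧ SL ls = 8 * m := by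
  rw [← Finset.disjoint_iff_inter_eq_empty] at hBY hBZ
  obtain ⟨C, hC, hCcard⟩ := exists_finset_disjoint_card_eq (B ∪ Y ∪ Z) Z.card
  obtain ⟨D, hD, hDcard⟩ := exists_finset_disjoint_card_eq (B ∪ Y ∪ Z ∪ C) Y.card
  refine ⟨realizingLists B Y Z C D, rfl, fun i hi => ?_, Aset_realizingLists hC hD,
    hatX1_realizingLists hBY hC hD, hatXn_realizingLists hBZ hC hD, ?_⟩
  · rw [List.getD_eq_getElem _ _ hi, ← hsum]
    exact card_of_mem_realizingLists hBY hBZ hC hD hCcard hDcard _ (List.getElem_mem hi)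
  · rw [SL_realizingLists hBY hBZ hC hD hCcard hDcard, hsum]
    ring

/-- Lemma `lem:realize`: any disjoint triple `(B, Y, Z)` with `|B| + |Y| + |Z| = 4m`
is realized as `(A, X̂_1, X̂_3)` by some list assignment on a 3-vertex path with all
lists of size `4m` and `S_L(P) = 8m`. -/
theorem realize_on_P3 (m : ℕ) (hm : 0 < m) (B Y Z : Finset ℕ)
    (hBY : B ∩ Y = ∅) (hBZ : B ∩ Z = ∅)
    (hsum : B.card + Y.card + Z.card = 4 * m) :
    ∃ ls : List (Finset ℕ), ls.length = 3 ∧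
      (∀ i, i < ls.length → (ls.getD i ∅).card = 4 * m) ∧
      Aset ls = B ∧ hatX1 ls = Y ∧ hatXn ls = Z ∧ SL ls = 8 * m :=
  realize_on_P3_general m B Y Z hBY hBZ hsum
end

section
/- Let m be a positive integer and let G be a graph containing a path P on 5 vertices, each of which has degree 2 in G. Let G' be the graph obtained from G by deleting the middle vertex of P and identifying its two neighbours into a single vertex (adjacent to all remaining former neighbours of those two vertices). Then G is (4m:2m)-choosable if and only if G' is (4m:2m)-choosable. -/
/-- `f` is a `b`-tuple `L`-colouring of `G`: each vertex gets a `b`-set of colours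
from its list, and adjacent vertices get disjoint sets. -/
def IsTupleListColoring {V : Type*} (G : SimpleGraph V) (L : V → Finset ℕ) (b : ℕ)
    (f : V → Finset ℕ) : Prop :=
  (∀ v, f v ⊆ L v) ∧ (∀ v, (f v).card = b) ∧ ∀ ⦃u v⦄, G.Adj u v → Disjoint (f u) (f v)

/-- `G` is `(L:b)`-colourable. -/
def ListColorable {V : Type*} (G : SimpleGraph V) (L : V → Finset ℕ) (b : ℕ) : Prop :=
  ∃ f, IsTupleListColoring G L b f

/-- `G` is `(a:b)`-choosable. -/
def Choosable {V : Type*} (G : SimpleGraph V) (a b : ℕ) : Prop :=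
  ∀ L : V → Finset ℕ, (∀ v, (L v).card = a) → ListColorable G L b

/-- `G` is the theta graph `Θ_{r,s,t}`: two vertices `u ≠ v` joined by three internally
vertex-disjoint paths of `r`, `s`, `t` edges, which together cover all vertices and edges. -/
def IsThetaGraph {V : Type*} (G : SimpleGraph V) (u v : V) (r s t : ℕ) : Prop :=
  u ≠ v ∧ ∃ (P Q R : G.Walk u v),
    P.IsPath ∧ Q.IsPath ∧ R.IsPath ∧
    P.length = r ∧ Q.length = s ∧ R.length = t ∧
    (∀ x, x ∈ P.support → x ∈ Q.support → x = u ∨ x = v) ∧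
    (∀ x, x ∈ P.support → x ∈ R.support → x = u ∨ x = v) ∧
    (∀ x, x ∈ Q.support → x ∈ R.support → x = u ∨ x = v) ∧
    (∀ x : V, x ∈ P.support ∨ x ∈ Q.support ∨ x ∈ R.support) ∧
    (∀ e ∈ G.edgeSet, e ∈ P.edges ∨ e ∈ Q.edges ∨ e ∈ R.edges)

/-- The graph obtained from `G` by deleting the vertex `b` and identifying the vertices
`a` and `c` into a single vertex (represented by `a`), which is adjacent to all
remaining former neighbours of `a` and of `c`. -/
def deleteAndMerge {V : Type*} (G : SimpleGraph V) (a b c : V) :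
    SimpleGraph {x : V // x ≠ b ∧ x ≠ c} where
  Adj x y := x.1 ≠ y.1 ∧
    (G.Adj x.1 y.1 ∨ (x.1 = a ∧ G.Adj c y.1) ∨ (y.1 = a ∧ G.Adj x.1 c))
  symm := by
    constructor
    rintro ⟨x, hx⟩ ⟨y, hy⟩ ⟨hne, h⟩
    refine ⟨hne.symm, ?_⟩
    rcases h with h | ⟨hx', h⟩ | ⟨hy', h⟩
    · exact Or.inl h.symm
    · exact Or.inr (Or.inr ⟨hx', h.symm⟩)
    · exact Or.inr (Or.inl ⟨hy', h.symm⟩)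
  loopless := by constructor; rintro ⟨x, hx⟩ ⟨hne, -⟩; exact hne rfl

/-!
Write `n = 2m`: lists have `2n` colours and every vertex receives `n` of them.

If `G` is choosable, colour the merged graph by giving `v₂`, `v₃`, `v₄` the list of the merged
vertex: `v₂` and `v₄` then both receive the complement of the colours of `v₃` in that list, so they
agree and the colouring of `G` descends.

Conversely, the lists `L v₁, …, L v₅` are traded for three lists `Λ₁`, `A`, `Λ₅` on `v₁`, the
merged vertex and `v₅`. In `L v₁` the colours of `L v₂ \ L v₃` are replaced by fresh ones (and
likewise at `v₅`), and `A` holds the colours of `L v₂ ∩ L v₃ ∩ L v₄` occurring at the ends together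
with fresh stand-ins for the replaced colours. Whatever the colours of the outer neighbours of `v₁`
and `v₅`, a colouring of the short path from these lists shows by counting that `v₁` and `v₅` can
be coloured from `L` while leaving enough colours to complete `v₂`, `v₃`, `v₄`. If `v₁ v₅` is an
edge, the merged graph has a triangle and is therefore not `(2n:n)`-choosable unless `n = 0`.
-/

open Finset SimpleGraph

namespace Finset

variable {α : Type*} [DecidableEq α]

theorem exists_disjoint_card_eq [Infinite α] (s : Finset α) (k : ℕ) :
    ∃ t : Finset α, Disjoint t s ∧ #t = k := by
  obtain ⟨u, hsu, hu⟩ := Infinite.exists_superset_card_eq s (#s + k) le_self_add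
  exact ⟨u \ s, sdiff_disjoint, by rw [card_sdiff_of_subset hsu]; omega⟩

theorem eq_sdiff_of_disjoint_of_card_le {s t u : Finset α} (hs : s ⊆ u) (ht : t ⊆ u)
    (hst : Disjoint s t) (hu : #u ≤ #s + #t) : s = u \ t :=
  eq_of_subset_of_card_le (subset_sdiff.2 ⟨hs, hst⟩) (by rw [card_sdiff_of_subset ht]; omega)

theorem card_sdiff_union_of_disjoint {s t u : Finset α} (hts : t ⊆ s) (hus : Disjoint u s)
    (hu : #u = #t) : #(s \ t ∪ u) = #s := by
  rw [card_union_of_disjoint (hus.symm.mono_left sdiff_subset), card_sdiff_of_subset hts]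
  have := card_le_card hts
  omega

theorem card_sdiff_add_card_sdiff_add_card_inter_add_card (U W M : Finset α) :
    #(U \ M) + #(W \ M) + #(M ∩ U ∩ W) + #M = #U + #W + #(M \ (U ∪ W)) := by
  set T := U ∪ W ∪ M
  rw [card_eq_sum_ite (t := T) (s := U \ M), card_eq_sum_ite (t := T) (s := W \ M),
    card_eq_sum_ite (t := T) (s := M ∩ U ∩ W), card_eq_sum_ite (t := T) (s := M),
    card_eq_sum_ite (t := T) (s := U), card_eq_sum_ite (t := T) (s := W),
    card_eq_sum_ite (t := T) (s := M \ (U ∪ W))]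
  · simp only [← sum_add_distrib]
    refine sum_congr rfl fun x _ => ?_
    by_cases x ∈ U <;> by_cases x ∈ W <;> by_cases x ∈ M <;> simp [*]
  all_goals intro x; simp only [T, mem_inter, mem_sdiff, mem_union]; tauto

theorem card_inter_add_card_inter_add_card_sdiff_union (U W M y z : Finset α) :
    #(U ∩ y) + #(W ∩ z) + #(M \ (U ∪ W)) =
      #(y ∩ (U \ M)) + #(z ∩ (W \ M)) + #(M ∩ U ∩ W ∩ (y ∪ z)) + #(M \ (U \ y ∪ W \ z)) := by
  set T := U ∪ W ∪ M ∪ y ∪ z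
  rw [card_eq_sum_ite (t := T) (s := U ∩ y), card_eq_sum_ite (t := T) (s := W ∩ z),
    card_eq_sum_ite (t := T) (s := M \ (U ∪ W)), card_eq_sum_ite (t := T) (s := y ∩ (U \ M)),
    card_eq_sum_ite (t := T) (s := z ∩ (W \ M)),
    card_eq_sum_ite (t := T) (s := M ∩ U ∩ W ∩ (y ∪ z)),
    card_eq_sum_ite (t := T) (s := M \ (U \ y ∪ W \ z))]
  · simp only [← sum_add_distrib]
    refine sum_congr rfl fun x _ => ?_
    by_cases x ∈ U <;> by_cases x ∈ W <;> by_cases x ∈ M <;> by_cases x ∈ y <;>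
      by_cases x ∈ z <;> simp [*]
  all_goals intro x; simp only [T, mem_inter, mem_sdiff, mem_union]; tauto

theorem exists_subset_card_eq_card_inter_le {s t : Finset α} {n d : ℕ} (hs : n ≤ #s)
    (hst : n ≤ #(s \ t) + d) : ∃ u ⊆ s, #u = n ∧ #(u ∩ t) ≤ d := by
  obtain ⟨v, hv, hvc⟩ := exists_subset_card_eq (min_le_right n #(s \ t))
  obtain ⟨u, hvu, hus, huc⟩ :=
    exists_subsuperset_card_eq (hv.trans sdiff_subset) (hvc ▸ min_le_left _ _) hs
  refine ⟨u, hus, huc, ?_⟩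
  have : u ∩ t ⊆ u \ v := fun x hx => mem_sdiff.2
    ⟨(mem_inter.1 hx).1, fun hxv => (mem_sdiff.1 (hv hxv)).2 (mem_inter.1 hx).2⟩
  have := card_le_card this
  rw [card_sdiff_of_subset hvu] at this
  omega

theorem exists_subset_card_eq_le_card_sdiff {M a b : Finset α} {n : ℕ} (hM : 2 * n ≤ #M)
    (ha : n ≤ #a) (hb : n ≤ #b) (hab : 3 * n ≤ #(M \ (a ∪ b)) + #a + #b) :
    ∃ S ⊆ M, #S = n ∧ n ≤ #(a \ S) ∧ n ≤ #(b \ S) := by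
  -- `S` prefers colours outside `a ∪ b`, then spends the budgets `#a - n` and `#b - n` on colours
  -- in only one of `a`, `b`, and what remains of both budgets on colours in `a ∩ b`.
  obtain ⟨A, hA, hAc⟩ := exists_subset_card_eq (min_le_left (#((M ∩ a) \ b)) (#a - n))
  obtain ⟨B, hB, hBc⟩ := exists_subset_card_eq (min_le_left (#((M ∩ b) \ a)) (#b - n))
  obtain ⟨C, hC, hCc⟩ :=
    exists_subset_card_eq (min_le_left (#(M ∩ a ∩ b)) (min (#a - n - #A) (#b - n - #B)))
  simp only [subset_iff, mem_sdiff, mem_inter] at hA hB hC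
  set F := M \ (a ∪ b)
  have hM' : #F + #((M ∩ a) \ b) + #((M ∩ b) \ a) + #(M ∩ a ∩ b) = #M := by
    rw [card_eq_sum_ite (t := M) (s := F), card_eq_sum_ite (t := M) (s := (M ∩ a) \ b),
      card_eq_sum_ite (t := M) (s := (M ∩ b) \ a), card_eq_sum_ite (t := M) (s := M ∩ a ∩ b),
      card_eq_sum_ite subset_rfl]
    · simp only [← sum_add_distrib]
      refine sum_congr rfl fun x _ => ?_
      by_cases x ∈ a <;> by_cases x ∈ b <;> simp [F, *]
    all_goals intro x; simp only [F, mem_inter, mem_sdiff]; tauto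
  have ha' : #((M ∩ a) \ b) + #(M ∩ a ∩ b) ≤ #a := by
    rw [← card_union_of_disjoint (disjoint_left.2 fun x h₁ h₂ => by simp_all)]
    exact card_le_card fun x hx => by simp at hx; tauto
  have hb' : #((M ∩ b) \ a) + #(M ∩ a ∩ b) ≤ #b := by
    rw [← card_union_of_disjoint (disjoint_left.2 fun x h₁ h₂ => by simp_all)]
    exact card_le_card fun x hx => by simp at hx; tauto
  have hpool : n ≤ #(F ∪ A ∪ B ∪ C) := by
    rw [card_union_of_disjoint, card_union_of_disjoint, card_union_of_disjoint]
    · omega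
    all_goals
      simp only [disjoint_left, mem_union, F, mem_sdiff]
      grind
  obtain ⟨S, hS, hSc⟩ := exists_subset_card_eq hpool
  simp only [subset_iff, mem_union, F, mem_sdiff] at hS
  have hSa : a ∩ S ⊆ A ∪ C := fun x hx => by simp only [mem_inter] at hx; grind
  have hSb : b ∩ S ⊆ B ∪ C := fun x hx => by simp only [mem_inter] at hx; grind
  have := card_le_card hSa; have := card_le_card hSb
  have := card_union_le A C; have := card_union_le B C
  have := card_sdiff_add_card_inter a S; have := card_sdiff_add_card_inter b S
  refine ⟨S, fun x hx => by grind, hSc, by omega, by omega⟩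

/-- `L \ P ∪ F` is `L` with the colours of `P` replaced by fresh ones. A set of `n` colours from it
avoiding `z` and `c` shows that `L \ z` has `n` colours meeting `P ∪ c` in few elements, fewer
the more fresh colours `c` takes. -/
theorem exists_subset_sdiff_card_inter_le_of_replace {n : ℕ} {L P F z c φ : Finset α}
    (hPL : P ⊆ L) (hL : #L = 2 * n) (hFL : Disjoint F L) (hF : #F = #P) (hz : #z ≤ n)
    (hPc : Disjoint P c) (hφ : φ ⊆ (L \ P ∪ F) \ z) (hφc : #φ = n) (hcφ : Disjoint c φ) :
    ∃ y ⊆ L \ z, #y = n ∧ #(y ∩ P) + #(y ∩ c) + #(c ∩ F) ≤ #P := by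
  have hΛ := card_sdiff_union_of_disjoint hPL hFL hF
  have hpieces : #((L \ P) \ c ∩ z) + #(c ∩ (L \ P)) + #(c ∩ F) + #φ ≤ #(L \ P ∪ F) := by
    simp only [subset_iff, mem_sdiff, mem_union] at hφ
    rw [disjoint_left] at hFL hPc hcφ
    rw [← card_union_of_disjoint, ← card_union_of_disjoint, ← card_union_of_disjoint]
    · refine card_le_card (union_subset (union_subset (union_subset ?_ ?_) ?_) ?_)
      all_goals intro x; simp only [mem_inter, mem_union, mem_sdiff]; grind
    all_goals simp only [disjoint_left, mem_inter, mem_union, mem_sdiff]; grind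
  have hB : #((L \ P) \ c) + #(c ∩ (L \ P)) = #(L \ P) := by
    rw [inter_comm]; exact card_sdiff_add_card_inter _ _
  have hBz := card_sdiff_add_card_inter ((L \ P) \ c) z
  have hLP := card_sdiff_of_subset hPL
  have hLz := le_card_sdiff z L
  have hcF : #(c ∩ F) ≤ #P := hF ▸ card_le_card inter_subset_right
  have hgood : (L \ z) \ (P ∪ c) = ((L \ P) \ c) \ z := by ext; simp; tauto
  obtain ⟨y, hyL, hy, hyPc⟩ := exists_subset_card_eq_card_inter_le (s := L \ z) (t := P ∪ c)
    (d := #P - #(c ∩ F)) (n := n) (by omega) (by rw [hgood]; omega)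
  refine ⟨y, hyL, hy, ?_⟩
  rw [inter_union_distrib_left,
    card_union_of_disjoint (hPc.mono inter_subset_right inter_subset_right)] at hyPc
  omega

end Finset

theorem isTupleListColoring_pathGraph {k b : ℕ} {L f : Fin k → Finset ℕ}
    (hL : ∀ i, f i ⊆ L i) (hc : ∀ i, #(f i) = b)
    (hd : ∀ i j : Fin k, i.val + 1 = j.val → Disjoint (f i) (f j)) :
    IsTupleListColoring (pathGraph k) L b f :=
  ⟨hL, hc, fun i j h => (pathGraph_adj.1 h).elim (hd i j) fun h => (hd j i h).symm⟩

theorem listColorable_pathGraph_five_of_ends {n : ℕ} {X₁ U M W X₅ y₁ y₅ : Finset ℕ}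
    (hU : #U = 2 * n) (hM : #M = 2 * n) (hW : #W = 2 * n) (hy₁ : y₁ ⊆ X₁) (hy₅ : y₅ ⊆ X₅)
    (hy₁c : #y₁ = n) (hy₅c : #y₅ = n)
    (hbudget : #(y₁ ∩ (U \ M)) + #(y₅ ∩ (W \ M)) + #(M ∩ U ∩ W ∩ (y₁ ∪ y₅)) ≤
      n + #(M \ (U ∪ W))) :
    ListColorable (pathGraph 5) ![X₁, U, M, W, X₅] n := by
  have hid := card_inter_add_card_inter_add_card_sdiff_union U W M y₁ y₅
  have hUy := card_sdiff_add_card_inter U y₁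
  have hWy := card_sdiff_add_card_inter W y₅
  have := card_le_card (inter_subset_right (s₁ := U) (s₂ := y₁))
  have := card_le_card (inter_subset_right (s₁ := W) (s₂ := y₅))
  obtain ⟨S, hSM, hS, hUS, hWS⟩ :=
    exists_subset_card_eq_le_card_sdiff (a := U \ y₁) (b := W \ y₅) hM.ge (by omega) (by omega)
      (by omega)
  obtain ⟨x₂, hx₂, hx₂c⟩ := exists_subset_card_eq hUS
  obtain ⟨x₄, hx₄, hx₄c⟩ := exists_subset_card_eq hWS
  refine ⟨![y₁, x₂, S, x₄, y₅], isTupleListColoring_pathGraph (fun i => ?_) (fun i => ?_)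
    (fun i j hij => ?_)⟩
  · fin_cases i
    exacts [hy₁, hx₂.trans (sdiff_subset.trans sdiff_subset), hSM,
      hx₄.trans (sdiff_subset.trans sdiff_subset), hy₅]
  · fin_cases i <;> assumption
  · fin_cases i <;> fin_cases j <;> simp at hij ⊢
    exacts [disjoint_sdiff.mono_right (hx₂.trans sdiff_subset),
      (disjoint_sdiff.mono_right hx₂).symm, disjoint_sdiff.mono_right hx₄,
      (disjoint_sdiff.mono_right (hx₄.trans sdiff_subset)).symm]

theorem card_inter_add_card_inter_add_card_inter_le {n : ℕ}
    {L₁ U M W L₅ F₁ F₅ E c y₁ y₅ : Finset ℕ} (hU : #U = 2 * n) (hM : #M = 2 * n)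
    (hW : #W = 2 * n) (hy₁ : y₁ ⊆ L₁) (hy₅ : y₅ ⊆ L₅)
    (hc : c ⊆ M ∩ U ∩ W ∩ (L₁ ∪ L₅) ∪ (F₁ ∪ F₅ ∪ E)) (hcn : #c = n)
    (hE : #E ≤ 2 * n - #(M ∩ U ∩ W ∩ (L₁ ∪ L₅)) - #((U \ M) ∩ L₁) - #((W \ M) ∩ L₅))
    (hy₁c : #(y₁ ∩ ((U \ M) ∩ L₁)) + #(y₁ ∩ c) + #(c ∩ F₁) ≤ #((U \ M) ∩ L₁))
    (hy₅c : #(y₅ ∩ ((W \ M) ∩ L₅)) + #(y₅ ∩ c) + #(c ∩ F₅) ≤ #((W \ M) ∩ L₅)) :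
    #(y₁ ∩ (U \ M)) + #(y₅ ∩ (W \ M)) + #(M ∩ U ∩ W ∩ (y₁ ∪ y₅)) ≤ n + #(M \ (U ∪ W)) := by
  set K := M ∩ U ∩ W ∩ (L₁ ∪ L₅)
  have hy₁U : y₁ ∩ (U \ M) ⊆ y₁ ∩ ((U \ M) ∩ L₁) := fun x hx => by
    simp only [mem_inter] at hx ⊢; exact ⟨hx.1, hx.2, hy₁ hx.1⟩
  have hy₅W : y₅ ∩ (W \ M) ⊆ y₅ ∩ ((W \ M) ∩ L₅) := fun x hx => by
    simp only [mem_inter] at hx ⊢; exact ⟨hx.1, hx.2, hy₅ hx.1⟩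
  have hyK : M ∩ U ∩ W ∩ (y₁ ∪ y₅) ⊆ K \ c ∪ y₁ ∩ c ∪ y₅ ∩ c := fun x hx => by
    simp only [subset_iff] at hy₁ hy₅
    simp only [K, mem_inter, mem_union, mem_sdiff] at hx ⊢
    grind
  have hcover : c ⊆ c ∩ K ∪ c ∩ F₁ ∪ c ∩ F₅ ∪ c ∩ E := fun x hx => by
    simp only [subset_iff, mem_union] at hc
    simp only [mem_union, mem_inter]
    grind
  have hcK : #(K \ c) + #(c ∩ K) = #K := by rw [inter_comm]; exact card_sdiff_add_card_inter _ _
  -- The `n` colours of `c` lie in `K ∪ F₁ ∪ F₅ ∪ E`; each one in `K`, `F₁` or `F₅` is saved at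
  -- the ends.
  have := card_le_card hy₁U; have := card_le_card hy₅W
  have := card_le_card hyK; have := card_le_card hcover
  have := card_union_le (K \ c ∪ y₁ ∩ c) (y₅ ∩ c)
  have := card_union_le (K \ c) (y₁ ∩ c)
  have := card_union_le (c ∩ K ∪ c ∩ F₁ ∪ c ∩ F₅) (c ∩ E)
  have := card_union_le (c ∩ K ∪ c ∩ F₁) (c ∩ F₅)
  have := card_union_le (c ∩ K) (c ∩ F₁)
  have : #(c ∩ E) ≤ #E := card_le_card inter_subset_right
  have := card_sdiff_add_card_sdiff_add_card_inter_add_card U W M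
  have : #((U \ M) ∩ L₁) ≤ #(U \ M) := card_le_card inter_subset_left
  have : #((W \ M) ∩ L₅) ≤ #(W \ M) := card_le_card inter_subset_left
  have : #K ≤ #(M ∩ U ∩ W) := card_le_card inter_subset_left
  omega

theorem listColorable_pathGraph_five_of_replace {n : ℕ} {L₁ U M W L₅ F₁ F₅ E G z₁ z₅ : Finset ℕ}
    (h₁ : #L₁ = 2 * n) (hU : #U = 2 * n) (hM : #M = 2 * n) (hW : #W = 2 * n)
    (h₅ : #L₅ = 2 * n) (hfresh : Disjoint (F₁ ∪ F₅ ∪ E) (L₁ ∪ L₅ ∪ M))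
    (hF₁ : #F₁ = #((U \ M) ∩ L₁)) (hF₅ : #F₅ = #((W \ M) ∩ L₅))
    (hE : #E ≤ 2 * n - #(M ∩ U ∩ W ∩ (L₁ ∪ L₅)) - #((U \ M) ∩ L₁) - #((W \ M) ∩ L₅))
    (hG : G ⊆ F₁ ∪ F₅ ∪ E) (hz₁ : #z₁ ≤ n) (hz₅ : #z₅ ≤ n)
    (h3 : ListColorable (pathGraph 3) ![(L₁ \ ((U \ M) ∩ L₁) ∪ F₁) \ z₁,
      M ∩ U ∩ W ∩ (L₁ ∪ L₅) ∪ G, (L₅ \ ((W \ M) ∩ L₅) ∪ F₅) \ z₅] n) :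
    ListColorable (pathGraph 5) ![L₁ \ z₁, U, M, W, L₅ \ z₅] n := by
  obtain ⟨f, hfL, hfc, hfd⟩ := h3
  have hc : f 1 ⊆ M ∩ U ∩ W ∩ (L₁ ∪ L₅) ∪ (F₁ ∪ F₅ ∪ E) :=
    (hfL 1).trans (union_subset_union_right hG)
  simp only [disjoint_union_left, disjoint_union_right] at hfresh
  have hdisj {S : Finset ℕ} (hSL : S ⊆ L₁ ∪ L₅) (hSM : Disjoint S M) : Disjoint S (f 1) :=
    disjoint_left.2 fun x hxS hxc => by
      simp only [subset_iff, mem_union, mem_inter] at hSL hc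
      grind [Finset.disjoint_left]
  obtain ⟨y₁, hy₁, hy₁c, hy₁P⟩ := exists_subset_sdiff_card_inter_le_of_replace inter_subset_right
    h₁ hfresh.1.1.1.1 hF₁ hz₁ (hdisj (inter_subset_right.trans subset_union_left)
      (sdiff_disjoint.mono_left inter_subset_left)) (hfL 0) (hfc 0)
    (hfd (by simp [pathGraph_adj])).symm
  obtain ⟨y₅, hy₅, hy₅c, hy₅Q⟩ := exists_subset_sdiff_card_inter_le_of_replace inter_subset_right
    h₅ hfresh.1.2.1.2 hF₅ hz₅ (hdisj (inter_subset_right.trans subset_union_right)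
      (sdiff_disjoint.mono_left inter_subset_left)) (hfL 2) (hfc 2) (hfd (by simp [pathGraph_adj]))
  exact listColorable_pathGraph_five_of_ends hU hM hW hy₁ hy₅ hy₁c hy₅c
    (card_inter_add_card_inter_add_card_inter_le hU hM hW (hy₁.trans sdiff_subset)
      (hy₅.trans sdiff_subset) hc (hfc 1) hE hy₁P hy₅Q)

theorem exists_lists_pathGraph_three {n : ℕ} {L₁ U M W L₅ : Finset ℕ} (h₁ : #L₁ = 2 * n)
    (hU : #U = 2 * n) (hM : #M = 2 * n) (hW : #W = 2 * n) (h₅ : #L₅ = 2 * n) :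
    ∃ Λ₁ A Λ₅ : Finset ℕ, #Λ₁ = 2 * n ∧ #A = 2 * n ∧ #Λ₅ = 2 * n ∧
      ∀ z₁ z₅ : Finset ℕ, #z₁ ≤ n → #z₅ ≤ n →
        ListColorable (pathGraph 3) ![Λ₁ \ z₁, A, Λ₅ \ z₅] n →
        ListColorable (pathGraph 5) ![L₁ \ z₁, U, M, W, L₅ \ z₅] n := by
  set K := M ∩ U ∩ W ∩ (L₁ ∪ L₅)
  set R := L₁ ∪ L₅ ∪ M
  have hKM : K ⊆ M := fun x hx => by simp only [K, mem_inter] at hx; exact hx.1.1.1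
  obtain ⟨F₁, hF₁, hF₁c⟩ := exists_disjoint_card_eq R #((U \ M) ∩ L₁)
  obtain ⟨F₅, hF₅, hF₅c⟩ := exists_disjoint_card_eq (R ∪ F₁) #((W \ M) ∩ L₅)
  -- `E` pads `A` to `2n` colours when `K` and the stand-ins `F₁`, `F₅` are too few.
  obtain ⟨E, hE, hEc⟩ := exists_disjoint_card_eq (R ∪ F₁ ∪ F₅)
    (2 * n - #K - #((U \ M) ∩ L₁) - #((W \ M) ∩ L₅))
  simp only [disjoint_union_right] at hF₅ hE
  have hfresh : Disjoint (F₁ ∪ F₅ ∪ E) R :=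
    disjoint_union_left.2 ⟨disjoint_union_left.2 ⟨hF₁, hF₅.1⟩, hE.1.1⟩
  obtain ⟨G, hG, hGc⟩ := exists_subset_card_eq (s := F₁ ∪ F₅ ∪ E) (n := 2 * n - #K) (by
    rw [card_union_of_disjoint (disjoint_union_left.2 ⟨hE.1.2.symm, hE.2.symm⟩),
      card_union_of_disjoint hF₅.2.symm]
    omega)
  refine ⟨L₁ \ ((U \ M) ∩ L₁) ∪ F₁, K ∪ G, L₅ \ ((W \ M) ∩ L₅) ∪ F₅, ?_, ?_, ?_,
    fun z₁ z₅ hz₁ hz₅ h3 => listColorable_pathGraph_five_of_replace h₁ hU hM hW h₅ hfresh hF₁c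
      hF₅c hEc.le hG hz₁ hz₅ h3⟩
  · rw [card_sdiff_union_of_disjoint inter_subset_right
      (hF₁.mono_right (subset_union_left.trans subset_union_left)) hF₁c, h₁]
  · rw [card_union_of_disjoint
      ((hfresh.mono_left hG).symm.mono_left (hKM.trans subset_union_right))]
    have := card_le_card hKM
    omega
  · rw [card_sdiff_union_of_disjoint inter_subset_right
      (hF₅.1.mono_right (subset_union_right.trans subset_union_left)) hF₅c, h₅]

section Graph

variable {V : Type*} {G : SimpleGraph V}

theorem choosable_zero (a : ℕ) : Choosable G a 0 := fun _ _ =>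
  ⟨fun _ => ∅, fun _ => empty_subset _, fun _ => card_empty, fun _ _ _ => disjoint_empty_left _⟩

theorem Choosable.three_mul_le {a b : ℕ} {x y z : V} (h : Choosable G a b) (hxy : G.Adj x y)
    (hyz : G.Adj y z) (hxz : G.Adj x z) : 3 * b ≤ a := by
  obtain ⟨f, hfL, hfc, hfd⟩ := h (fun _ => range a) fun _ => card_range a
  have hsub := card_le_card (union_subset (union_subset (hfL x) (hfL y)) (hfL z))
  rw [card_union_of_disjoint (disjoint_union_left.2 ⟨hfd hxz, hfd hyz⟩),
    card_union_of_disjoint (hfd hxy), hfc, hfc, hfc, card_range] at hsub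
  omega

theorem IsTupleListColoring.extend {ι : Type*} {H : SimpleGraph ι} {L : V → Finset ℕ}
    {LH : ι → Finset ℕ} {b : ℕ} {p : ι → V} {c : ι → Finset ℕ} {g : V → Finset ℕ}
    (hc : IsTupleListColoring H LH b c) (hp : Function.Injective p) (hLH : ∀ i, LH i ⊆ L (p i))
    (hH : ∀ i j, G.Adj (p i) (p j) → H.Adj i j) (hgL : ∀ x ∉ Set.range p, g x ⊆ L x)
    (hgc : ∀ x ∉ Set.range p, #(g x) = b)
    (hgd : ∀ x y, x ∉ Set.range p → y ∉ Set.range p → G.Adj x y → Disjoint (g x) (g y))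
    (hcg : ∀ i x, x ∉ Set.range p → G.Adj (p i) x → Disjoint (c i) (g x)) :
    IsTupleListColoring G L b (Function.extend p c g) := by
  classical
  have hcd (i : ι) (y : V) (hy : G.Adj (p i) y) : Disjoint (c i) (Function.extend p c g y) := by
    by_cases hy' : y ∈ Set.range p
    · obtain ⟨j, rfl⟩ := hy'
      rw [hp.extend_apply]
      exact hc.2.2 (hH i j hy)
    · rw [Function.extend_apply' _ _ _ hy']
      exact hcg i y hy' hy
  refine ⟨fun x => ?_, fun x => ?_, fun x y hxy => ?_⟩
  · by_cases hx : x ∈ Set.range p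
    · obtain ⟨i, rfl⟩ := hx
      rw [hp.extend_apply]
      exact (hc.1 i).trans (hLH i)
    · rw [Function.extend_apply' _ _ _ hx]
      exact hgL x hx
  · by_cases hx : x ∈ Set.range p
    · obtain ⟨i, rfl⟩ := hx
      rw [hp.extend_apply]
      exact hc.2.1 i
    · rw [Function.extend_apply' _ _ _ hx]
      exact hgc x hx
  · by_cases hx : x ∈ Set.range p
    · obtain ⟨i, rfl⟩ := hx
      rw [hp.extend_apply]
      exact hcd i y hxy
    by_cases hy : y ∈ Set.range p
    · obtain ⟨j, rfl⟩ := hy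
      rw [hp.extend_apply]
      exact (hcd j x hxy.symm).symm
    rw [Function.extend_apply' _ _ _ hx, Function.extend_apply' _ _ _ hy]
    exact hgd x y hx hy hxy

theorem exists_adj_iff_of_ncard_neighborSet_eq_two {w a : V}
    (hdeg : (G.neighborSet w).ncard = 2) (ha : G.Adj w a) :
    ∃ u, u ≠ a ∧ ∀ x, G.Adj w x ↔ x = a ∨ x = u := by
  obtain ⟨c, d, hcd, hN⟩ := Set.ncard_eq_two.1 hdeg
  have hadj (x : V) : G.Adj w x ↔ x = c ∨ x = d := by
    rw [← mem_neighborSet, hN, Set.mem_insert_iff, Set.mem_singleton_iff]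
  rcases (hadj a).1 ha with rfl | rfl
  · exact ⟨d, hcd.symm, hadj⟩
  · exact ⟨c, hcd, fun x => (hadj x).trans or_comm⟩

theorem adj_iff_of_ncard_neighborSet_eq_two {w a b : V} (hdeg : (G.neighborSet w).ncard = 2)
    (ha : G.Adj w a) (hb : G.Adj w b) (hab : a ≠ b) (x : V) : G.Adj w x ↔ x = a ∨ x = b := by
  obtain ⟨u, -, hu⟩ := exists_adj_iff_of_ncard_neighborSet_eq_two hdeg ha
  obtain rfl : b = u := ((hu b).1 hb).resolve_left hab.symm
  exact hu x

theorem choosable_deleteAndMerge {n : ℕ} {a b c : V} (h : Choosable G (2 * n) n)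
    (hab : G.Adj a b) (hbc : G.Adj b c) (hac : a ≠ c) :
    Choosable (deleteAndMerge G a b c) (2 * n) n := by
  classical
  intro L' hL'
  let A := L' ⟨a, hab.ne, hac⟩
  obtain ⟨f, hfL, hfc, hfd⟩ :=
    h (fun x => if hx : x ≠ b ∧ x ≠ c then L' ⟨x, hx⟩ else A) fun x => by
      split_ifs <;> apply hL'
  have hfL' (x : {x // x ≠ b ∧ x ≠ c}) : f x ⊆ L' x := by simpa [x.2] using hfL x
  have hfA (x : V) (hx : x = b ∨ x = c) : f x ⊆ A := by
    simpa [show ¬(x ≠ b ∧ x ≠ c) by tauto] using hfL x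
  have hfac : f a = f c := by
    have hA : #A ≤ n + n := by rw [hL']; omega
    rw [eq_sdiff_of_disjoint_of_card_le (hfL' ⟨a, hab.ne, hac⟩) (hfA b (.inl rfl)) (hfd hab)
        (by rwa [hfc, hfc]),
      eq_sdiff_of_disjoint_of_card_le (hfA c (.inr rfl)) (hfA b (.inl rfl)) (hfd hbc.symm)
        (by rwa [hfc, hfc])]
  refine ⟨fun x => f x, hfL', fun x => hfc x, ?_⟩
  rintro x y ⟨-, hxy | ⟨hx, hcy⟩ | ⟨hy, hxc⟩⟩
  · exact hfd hxy
  · simpa [hx, hfac] using hfd hcy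
  · simpa [hy, hfac] using hfd hxc

end Graph

theorem notMem_range_five {V : Type*} {v₁ v₂ v₃ v₄ v₅ x : V} :
    x ∉ Set.range ![v₁, v₂, v₃, v₄, v₅] ↔ x ≠ v₁ ∧ x ≠ v₂ ∧ x ≠ v₃ ∧ x ≠ v₄ ∧ x ≠ v₅ := by
  simp only [Matrix.range_cons, Matrix.range_empty, Set.union_empty, Set.mem_union,
    Set.mem_singleton_iff]
  tauto

section Reduction

variable {V : Type*} {G : SimpleGraph V} {n : ℕ} {v₁ v₂ v₃ v₄ v₅ : V}

theorem exists_restrict_of_choosable_deleteAndMerge {u₁ u₅ : V}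
    (hdist : [v₁, v₂, v₃, v₄, v₅].Pairwise (· ≠ ·)) (h12 : G.Adj v₁ v₂) (h45 : G.Adj v₄ v₅)
    (hu₁ : G.Adj v₁ u₁) (hu₅ : G.Adj v₅ u₅) (hu₁p : u₁ ∉ Set.range ![v₁, v₂, v₃, v₄, v₅])
    (hu₅p : u₅ ∉ Set.range ![v₁, v₂, v₃, v₄, v₅])
    (h : Choosable (deleteAndMerge G v₂ v₃ v₄) (2 * n) n) {L : V → Finset ℕ}
    (hL : ∀ v, #(L v) = 2 * n) {Λ₁ A Λ₅ : Finset ℕ} (hΛ₁ : #Λ₁ = 2 * n) (hA : #A = 2 * n)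
    (hΛ₅ : #Λ₅ = 2 * n) :
    ∃ g : V → Finset ℕ, (∀ x ∉ Set.range ![v₁, v₂, v₃, v₄, v₅], g x ⊆ L x ∧ #(g x) = n) ∧
      (∀ x y, x ∉ Set.range ![v₁, v₂, v₃, v₄, v₅] → y ∉ Set.range ![v₁, v₂, v₃, v₄, v₅] →
        G.Adj x y → Disjoint (g x) (g y)) ∧
      ListColorable (pathGraph 3) ![Λ₁ \ g u₁, A, Λ₅ \ g u₅] n := by
  classical
  simp only [List.pairwise_cons, List.mem_cons, List.mem_nil_iff, or_false, forall_eq_or_imp,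
    forall_eq, List.Pairwise.nil] at hdist
  obtain ⟨⟨h12', h13, h14, h15⟩, ⟨h23, h24, h25⟩, ⟨-, h35⟩, h45', -⟩ := hdist
  rw [notMem_range_five] at hu₁p hu₅p
  let L' (x : {x // x ≠ v₃ ∧ x ≠ v₄}) : Finset ℕ :=
    if x.1 = v₁ then Λ₁ else if x.1 = v₂ then A else if x.1 = v₅ then Λ₅ else L x
  obtain ⟨f, hfL, hfc, hfd⟩ := h L' fun x => by dsimp only [L']; split_ifs <;> simp [*]
  -- the value `∅` at `v₃`, `v₄` is never used
  let g (x : V) : Finset ℕ := if hx : x ≠ v₃ ∧ x ≠ v₄ then f ⟨x, hx⟩ else ∅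
  have hg (x : V) (hx : x ≠ v₃ ∧ x ≠ v₄) : g x = f ⟨x, hx⟩ := dif_pos hx
  have hgL (x : V) (hx : x ≠ v₃ ∧ x ≠ v₄) : g x ⊆ L' ⟨x, hx⟩ := hg x hx ▸ hfL _
  have hgc (x : V) (hx : x ≠ v₃ ∧ x ≠ v₄) : #(g x) = n := hg x hx ▸ hfc _
  have hgd (x y : V) (hx : x ≠ v₃ ∧ x ≠ v₄) (hy : y ≠ v₃ ∧ y ≠ v₄)
      (hxy : (deleteAndMerge G v₂ v₃ v₄).Adj ⟨x, hx⟩ ⟨y, hy⟩) : Disjoint (g x) (g y) := by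
    rw [hg x hx, hg y hy]
    exact hfd hxy
  have hv₁ : v₁ ≠ v₃ ∧ v₁ ≠ v₄ := ⟨h13, h14⟩
  have hv₂ : v₂ ≠ v₃ ∧ v₂ ≠ v₄ := ⟨h23, h24⟩
  have hv₅ : v₅ ≠ v₃ ∧ v₅ ≠ v₄ := ⟨h35.symm, h45'.symm⟩
  refine ⟨g, fun x hx => ?_, fun x y hx hy hxy => ?_, ![g v₁, g v₂, g v₅],
    isTupleListColoring_pathGraph (fun i => ?_) (fun i => ?_) (fun i j hij => ?_)⟩
  · rw [notMem_range_five] at hx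
    refine ⟨?_, hgc x ⟨hx.2.2.1, hx.2.2.2.1⟩⟩
    simpa [L', hx.1, hx.2.1, hx.2.2.2.2] using hgL x ⟨hx.2.2.1, hx.2.2.2.1⟩
  · rw [notMem_range_five] at hx hy
    exact hgd x y ⟨hx.2.2.1, hx.2.2.2.1⟩ ⟨hy.2.2.1, hy.2.2.2.1⟩ ⟨hxy.ne, .inl hxy⟩
  · fin_cases i
    · exact subset_sdiff.2 ⟨by simpa [L'] using hgL v₁ hv₁,
        hgd _ _ hv₁ ⟨hu₁p.2.2.1, hu₁p.2.2.2.1⟩ ⟨hu₁p.1.symm, .inl hu₁⟩⟩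
    · simpa [L', h12'.symm] using hgL v₂ hv₂
    · exact subset_sdiff.2 ⟨by simpa [L', h15.symm, h25.symm] using hgL v₅ hv₅,
        hgd _ _ hv₅ ⟨hu₅p.2.2.1, hu₅p.2.2.2.1⟩ ⟨hu₅p.2.2.2.2.symm, .inl hu₅⟩⟩
  · fin_cases i
    exacts [hgc _ hv₁, hgc _ hv₂, hgc _ hv₅]
  · fin_cases i <;> fin_cases j <;> simp at hij ⊢
    exacts [hgd _ _ hv₁ hv₂ ⟨h12', .inl h12⟩, hgd _ _ hv₂ hv₅ ⟨h25, .inr (.inl ⟨rfl, h45⟩)⟩]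

theorem injective_of_pairwise_ne (hdist : [v₁, v₂, v₃, v₄, v₅].Pairwise (· ≠ ·)) :
    Function.Injective ![v₁, v₂, v₃, v₄, v₅] := by
  simp only [List.pairwise_cons, List.mem_cons, List.mem_nil_iff, or_false, forall_eq_or_imp,
    forall_eq, List.Pairwise.nil] at hdist
  intro i j hij
  fin_cases i <;> fin_cases j <;> simp at hij ⊢ <;> grind

theorem eq_zero_of_choosable_deleteAndMerge (hdist : [v₁, v₂, v₃, v₄, v₅].Pairwise (· ≠ ·))
    (h12 : G.Adj v₁ v₂) (h45 : G.Adj v₄ v₅) (h15 : G.Adj v₁ v₅)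
    (h : Choosable (deleteAndMerge G v₂ v₃ v₄) (2 * n) n) : n = 0 := by
  simp only [List.pairwise_cons, List.mem_cons, List.mem_nil_iff, or_false, forall_eq_or_imp,
    forall_eq, List.Pairwise.nil] at hdist
  obtain ⟨⟨h12', h13, h14, h15'⟩, ⟨h23, h24, h25⟩, ⟨-, h35⟩, h45', -⟩ := hdist
  have := h.three_mul_le (x := ⟨v₁, h13, h14⟩) (y := ⟨v₂, h23, h24⟩)
    (z := ⟨v₅, h35.symm, h45'.symm⟩) ⟨h12', .inl h12⟩ ⟨h25, .inr (.inl ⟨rfl, h45⟩)⟩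
    ⟨h15', .inl h15⟩
  omega

theorem exists_outer_neighbors (hdist : [v₁, v₂, v₃, v₄, v₅].Pairwise (· ≠ ·))
    (h12 : G.Adj v₁ v₂) (h23 : G.Adj v₂ v₃) (h34 : G.Adj v₃ v₄) (h45 : G.Adj v₄ v₅)
    (hdeg : ∀ w ∈ [v₁, v₂, v₃, v₄, v₅], (G.neighborSet w).ncard = 2) (h15 : ¬G.Adj v₁ v₅) :
    ∃ u₁ u₅, G.Adj v₁ u₁ ∧ G.Adj v₅ u₅ ∧ u₁ ∉ Set.range ![v₁, v₂, v₃, v₄, v₅] ∧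
      u₅ ∉ Set.range ![v₁, v₂, v₃, v₄, v₅] ∧
      (∀ i j, G.Adj (![v₁, v₂, v₃, v₄, v₅] i) (![v₁, v₂, v₃, v₄, v₅] j) →
        (pathGraph 5).Adj i j) ∧
      ∀ i x, x ∉ Set.range ![v₁, v₂, v₃, v₄, v₅] → G.Adj (![v₁, v₂, v₃, v₄, v₅] i) x →
        i = 0 ∧ x = u₁ ∨ i = 4 ∧ x = u₅ := by
  simp only [List.pairwise_cons, List.mem_cons, List.mem_nil_iff, or_false, forall_eq_or_imp,
    forall_eq, List.Pairwise.nil] at hdist hdeg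
  obtain ⟨⟨h12', h13, h14, h15'⟩, ⟨h23', h24, h25⟩, ⟨h34', h35⟩, h45', -⟩ := hdist
  obtain ⟨u₁, hu₁v₂, N₁⟩ := exists_adj_iff_of_ncard_neighborSet_eq_two hdeg.1 h12
  obtain ⟨u₅, hu₅v₄, N₅⟩ := exists_adj_iff_of_ncard_neighborSet_eq_two hdeg.2.2.2.2 h45.symm
  have N₂ := adj_iff_of_ncard_neighborSet_eq_two hdeg.2.1 h12.symm h23 h13
  have N₃ := adj_iff_of_ncard_neighborSet_eq_two hdeg.2.2.1 h23.symm h34 h24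
  have N₄ := adj_iff_of_ncard_neighborSet_eq_two hdeg.2.2.2.1 h34.symm h45 h35
  have hu₁ := (N₁ u₁).2 (.inr rfl)
  have hu₅ := (N₅ u₅).2 (.inr rfl)
  simp only [notMem_range_five]
  refine ⟨u₁, u₅, hu₁, hu₅, ?_, ?_, fun i j hij => ?_, fun i x hx hix => ?_⟩
  · grind [SimpleGraph.Adj.symm, SimpleGraph.irrefl]
  · grind [SimpleGraph.Adj.symm, SimpleGraph.irrefl]
  · fin_cases i <;> fin_cases j <;> simp [pathGraph_adj, N₁, N₂, N₃, N₄, N₅] at hij ⊢ <;>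
      grind [SimpleGraph.Adj.symm, SimpleGraph.irrefl]
  · fin_cases i <;> simp [N₁, N₂, N₃, N₄, N₅] at hix ⊢ <;> grind

theorem choosable_of_choosable_deleteAndMerge
    (hdist : [v₁, v₂, v₃, v₄, v₅].Pairwise (· ≠ ·)) (h12 : G.Adj v₁ v₂) (h23 : G.Adj v₂ v₃)
    (h34 : G.Adj v₃ v₄) (h45 : G.Adj v₄ v₅)
    (hdeg : ∀ w ∈ [v₁, v₂, v₃, v₄, v₅], (G.neighborSet w).ncard = 2)
    (h : Choosable (deleteAndMerge G v₂ v₃ v₄) (2 * n) n) : Choosable G (2 * n) n := by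
  by_cases h15 : G.Adj v₁ v₅
  · obtain rfl := eq_zero_of_choosable_deleteAndMerge hdist h12 h45 h15 h
    exact choosable_zero _
  obtain ⟨u₁, u₅, hu₁, hu₅, hu₁p, hu₅p, hpath, hout⟩ :=
    exists_outer_neighbors hdist h12 h23 h34 h45 hdeg h15
  intro L hL
  obtain ⟨Λ₁, A, Λ₅, hΛ₁, hA, hΛ₅, hext⟩ :=
    exists_lists_pathGraph_three (hL v₁) (hL v₂) (hL v₃) (hL v₄) (hL v₅)
  obtain ⟨g, hgL, hgd, h3⟩ := exists_restrict_of_choosable_deleteAndMerge hdist h12 h45 hu₁ hu₅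
    hu₁p hu₅p h hL hΛ₁ hA hΛ₅
  obtain ⟨c, hc⟩ := hext (g u₁) (g u₅) (hgL u₁ hu₁p).2.le (hgL u₅ hu₅p).2.le h3
  refine ⟨Function.extend ![v₁, v₂, v₃, v₄, v₅] c g, hc.extend (injective_of_pairwise_ne hdist)
    (fun i => ?_) hpath (fun x hx => (hgL x hx).1) (fun x hx => (hgL x hx).2) hgd
    (fun i x hx hix => ?_)⟩
  · fin_cases i <;> simp
  · rcases hout i x hx hix with ⟨rfl, rfl⟩ | ⟨rfl, rfl⟩
    exacts [sdiff_disjoint.mono_left (hc.1 0), sdiff_disjoint.mono_left (hc.1 4)]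

end Reduction

theorem p5_reduction_general (m : ℕ) (V : Type) (G : SimpleGraph V)
    (v₁ v₂ v₃ v₄ v₅ : V) (hdist : [v₁, v₂, v₃, v₄, v₅].Pairwise (· ≠ ·))
    (h12 : G.Adj v₁ v₂) (h23 : G.Adj v₂ v₃) (h34 : G.Adj v₃ v₄) (h45 : G.Adj v₄ v₅)
    (hdeg : ∀ w ∈ [v₁, v₂, v₃, v₄, v₅], (G.neighborSet w).ncard = 2) :
    Choosable G (4 * m) (2 * m) ↔
      Choosable (deleteAndMerge G v₂ v₃ v₄) (4 * m) (2 * m) := by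
  have hv₂₄ : v₂ ≠ v₄ := by simp_all
  rw [show 4 * m = 2 * (2 * m) by ring]
  exact ⟨fun h => choosable_deleteAndMerge h h23 h34 hv₂₄,
    choosable_of_choosable_deleteAndMerge hdist h12 h23 h34 h45 hdeg⟩

/-- Lemma `lem:p5`: if `G` contains a path `v₁v₂v₃v₄v₅` on 5 vertices, each of degree 2
in `G`, and `G'` is obtained from `G` by deleting the middle vertex `v₃` and identifying
its two neighbours `v₂` and `v₄`, then `G` is `(4m:2m)`-choosable iff `G'` is
`(4m:2m)`-choosable. -/
theorem p5_reduction (m : ℕ) (hm : 0 < m) (V : Type) (G : SimpleGraph V)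
    (v₁ v₂ v₃ v₄ v₅ : V) (hdist : [v₁, v₂, v₃, v₄, v₅].Pairwise (· ≠ ·))
    (h12 : G.Adj v₁ v₂) (h23 : G.Adj v₂ v₃) (h34 : G.Adj v₃ v₄) (h45 : G.Adj v₄ v₅)
    (hdeg : ∀ w ∈ [v₁, v₂, v₃, v₄, v₅], (G.neighborSet w).ncard = 2) :
    Choosable G (4 * m) (2 * m) ↔
      Choosable (deleteAndMerge G v₂ v₃ v₄) (4 * m) (2 * m) :=
  p5_reduction_general m V G v₁ v₂ v₃ v₄ v₅ hdist h12 h23 h34 h45 hdeg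
end
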